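/- arXiv:2004.01408 — 5 statements merged into one kernel-verified Lean document; each statement's English description precedes it below -/
import Mathlib

section
/- Let f : ℝ^d → ℝ^n be a function, let R', V, N be subsets of ℝ^d with R' contained in the convex hull of V, and let f̄', f_', f̄, f_ : ℝ^d → ℝ^n be affine maps. Suppose: (i) f_'(x) ≤ f(x) ≤ f̄'(x) componentwise for all x ∈ R'; (ii) f_(x) ≤ f(x) ≤ f̄(x) componentwise for all x ∈ N; and (iii) f̄'(v) ≤ f̄(v) and f_(v) ≤ f_'(v) componentwise for all v ∈ V. Then f_(x) ≤ f(x) ≤ f̄(x) componentwise for all x ∈ R' ∪ N. -/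
/-!
On the old region `R'` the old pair already brackets `f`, so it suffices that the new pair
encloses the old one on `R'`. The difference of two affine maps is affine, so the set where one
affine map lies below another is convex; enclosure on `V` therefore propagates to
`convexHull ℝ V ⊇ R'`.
-/

namespace AffineMap

variable {𝕜 E β : Type*} [Ring 𝕜] [PartialOrder 𝕜] [AddCommGroup E] [Module 𝕜 E]
  [AddCommGroup β] [PartialOrder β] [IsOrderedAddMonoid β] [Module 𝕜 β] [PosSMulMono 𝕜 β]

theorem convex_setOf_le (g h : E →ᵃ[𝕜] β) : Convex 𝕜 {x | g x ≤ h x} := by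
  have : {x | g x ≤ h x} = (h - g) ⁻¹' Set.Ici 0 := by
    ext x
    simp [sub_nonneg]
  rw [this]
  exact (convex_Ici 0).affine_preimage (h - g)

theorem le_of_mem_convexHull {g h : E →ᵃ[𝕜] β} {V : Set E} (hV : ∀ v ∈ V, g v ≤ h v) {x : E}
    (hx : x ∈ convexHull 𝕜 V) : g x ≤ h x :=
  convexHull_min hV (convex_setOf_le g h) hx

end AffineMap

/-- One step of incremental abstraction: if the previous affine pair
`(fl', fu')` brackets `f` on `R'`, the new affine pair `(fl, fu)` brackets `f`
on the newly added points `N` and encloses the previous pair on a set `V` of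
vertices whose convex hull contains `R'`, then `(fl, fu)` brackets `f` on
`R' ∪ N`. -/
theorem incremental_abstraction_step (d n : ℕ)
    (f : (Fin d → ℝ) → (Fin n → ℝ))
    (R' V N : Set (Fin d → ℝ))
    (hRV : R' ⊆ convexHull ℝ V)
    (fu' fl' fu fl : (Fin d → ℝ) →ᵃ[ℝ] (Fin n → ℝ))
    (hprev : ∀ x ∈ R', fl' x ≤ f x ∧ f x ≤ fu' x)
    (hnew : ∀ x ∈ N, fl x ≤ f x ∧ f x ≤ fu x)
    (hencl : ∀ v ∈ V, fu' v ≤ fu v ∧ fl v ≤ fl' v) :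
    ∀ x ∈ R' ∪ N, fl x ≤ f x ∧ f x ≤ fu x := by
  rintro x (hxR | hxN)
  · have hx := hRV hxR
    exact ⟨(AffineMap.le_of_mem_convexHull (fun v hv => (hencl v hv).2) hx).trans (hprev x hxR).1,
      (hprev x hxR).2.trans (AffineMap.le_of_mem_convexHull (fun v hv => (hencl v hv).1) hx)⟩
  · exact hnew x hxN
end

section
/- Let f : ℝ^d → ℝ^n be a function, let κ ≥ 1 be an integer, and let ∅ = R_0 ⊆ R_1 ⊆ ⋯ ⊆ R_κ be finite subsets of ℝ^d. For each k ∈ {1, …, κ}, let f̄_k, f_k : ℝ^d → ℝ^n be affine maps such that: (i) f_k(x) ≤ f(x) ≤ f̄_k(x) componentwise for all x ∈ R_k \ R_{k−1}; and (ii) for every k ∈ {2, …, κ}, f̄_{k−1}(v) ≤ f̄_k(v) and f_k(v) ≤ f_{k−1}(v) componentwise for every extreme point v of the convex hull of R_{k−1}. Then f_κ(x) ≤ f(x) ≤ f̄_κ(x) componentwise for all x ∈ R_κ. -/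
/-!
Induction on the increment `k`. A point of `R (k + 1)` is either new, where the pair at
increment `k + 1` brackets `f` by assumption, or lies in `R k`, where the pair at increment `k`
brackets `f` by induction. In the second case the enclosure conditions transfer: `f̄ₖ₊₁ - f̄ₖ`
and `fₖ - fₖ₊₁` are affine, so their nonnegativity at the extreme points of the polytope
`conv (R k)` propagates, by Krein–Milman, to the whole polytope and in particular to `R k`.
-/

open Set

section ExtremePoints

variable {E F : Type*} [AddCommGroup E] [Module ℝ E] [TopologicalSpace E] [T2Space E]
  [IsTopologicalAddGroup E] [ContinuousSMul ℝ E] [LocallyConvexSpace ℝ E]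

theorem AffineMap.mapsTo_of_mapsTo_extremePoints [AddCommGroup F] [Module ℝ F]
    [TopologicalSpace F] {K : Set E} (hK : IsCompact K) (hKc : Convex ℝ K)
    {g : E →ᵃ[ℝ] F} (hg : Continuous g) {t : Set F} (ht : IsClosed t) (htc : Convex ℝ t)
    (h : MapsTo g (K.extremePoints ℝ) t) : MapsTo g K t := by
  have hull : MapsTo g (convexHull ℝ (K.extremePoints ℝ)) t := by
    rw [mapsTo_iff_image_subset, g.image_convexHull]
    exact convexHull_min h.image_subset htc
  rw [← closure_convexHull_extremePoints hK hKc, ← ht.closure_eq]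
  exact hull.closure hg

theorem AffineMap.le_of_le_on_extremePoints [AddCommGroup F] [PartialOrder F]
    [IsOrderedAddMonoid F] [Module ℝ F] [PosSMulMono ℝ F] [TopologicalSpace F]
    [IsTopologicalAddGroup F] [OrderClosedTopology F] {K : Set E} (hK : IsCompact K)
    (hKc : Convex ℝ K) {u w : E →ᵃ[ℝ] F} (hu : Continuous u) (hw : Continuous w)
    (h : ∀ v ∈ K.extremePoints ℝ, u v ≤ w v) {x : E} (hx : x ∈ K) : u x ≤ w x :=
  sub_nonneg.1 <| (w - u).mapsTo_of_mapsTo_extremePoints hK hKc (hw.sub hu) isClosed_Ici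
    (convex_Ici 0) (fun v hv => sub_nonneg.2 (h v hv)) hx

end ExtremePoints

theorem incremental_abstraction_induction_general (d n : ℕ) (κ : ℕ)
    (f : (Fin d → ℝ) → (Fin n → ℝ))
    (R : ℕ → Set (Fin d → ℝ))
    (hfin : ∀ k ≤ κ, (R k).Finite)
    (hR0 : R 0 = ∅)
    (fu fl : ℕ → ((Fin d → ℝ) →ᵃ[ℝ] (Fin n → ℝ)))
    (hbracket : ∀ k, 1 ≤ k → k ≤ κ → ∀ x ∈ R k \ R (k - 1),
      fl k x ≤ f x ∧ f x ≤ fu k x)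
    (hencl : ∀ k, 2 ≤ k → k ≤ κ →
      ∀ v ∈ Set.extremePoints ℝ (convexHull ℝ (R (k - 1))),
        fu (k - 1) v ≤ fu k v ∧ fl k v ≤ fl (k - 1) v) :
    ∀ x ∈ R κ, fl κ x ≤ f x ∧ f x ≤ fu κ x := by
  suffices ∀ k ≤ κ, ∀ x ∈ R k, fl k x ≤ f x ∧ f x ≤ fu k x from this κ le_rfl
  intro k
  induction k with
  | zero => simp [hR0]
  | succ k ih =>
    intro hk x hx
    by_cases hxk : x ∈ R k
    · have hk0 : k ≠ 0 := by rintro rfl; simp [hR0] at hxk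
      have encl : ∀ v ∈ (convexHull ℝ (R k)).extremePoints ℝ,
          fu k v ≤ fu (k + 1) v ∧ fl (k + 1) v ≤ fl k v := by
        simpa only [Nat.add_sub_cancel] using hencl (k + 1) (by omega) hk
      have hK := (hfin k (by omega)).isCompact_convexHull ℝ
      have hxK := subset_convexHull ℝ (R k) hxk
      have hfu := AffineMap.le_of_le_on_extremePoints hK (convex_convexHull ℝ _)
        (fu k).continuous_of_finiteDimensional (fu (k + 1)).continuous_of_finiteDimensional
        (fun v hv => (encl v hv).1) hxK
      have hfl := AffineMap.le_of_le_on_extremePoints hK (convex_convexHull ℝ _)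
        (fl (k + 1)).continuous_of_finiteDimensional (fl k).continuous_of_finiteDimensional
        (fun v hv => (encl v hv).2) hxK
      obtain ⟨hl, hu⟩ := ih (by omega) x hxk
      exact ⟨hfl.trans hl, hu.trans hfu⟩
    · exact hbracket (k + 1) (by omega) hk x ⟨hx, hxk⟩

/-- Inductive core of the incremental abstraction theorem: if at every
increment `k ∈ {1, …, κ}` the affine pair `(fl k, fu k)` brackets `f` at the
newly added points `R k \ R (k-1)`, and for `k ∈ {2, …, κ}` the pair at
increment `k` encloses the pair at increment `k-1` at every extreme point of
the convex hull of `R (k-1)`, then the final pair `(fl κ, fu κ)` brackets `f`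
on all of `R κ`. -/
theorem incremental_abstraction_induction (d n : ℕ) (κ : ℕ) (hκ : 1 ≤ κ)
    (f : (Fin d → ℝ) → (Fin n → ℝ))
    (R : ℕ → Set (Fin d → ℝ))
    (hfin : ∀ k ≤ κ, (R k).Finite)
    (hR0 : R 0 = ∅)
    (hmono : ∀ k, k < κ → R k ⊆ R (k + 1))
    (fu fl : ℕ → ((Fin d → ℝ) →ᵃ[ℝ] (Fin n → ℝ)))
    (hbracket : ∀ k, 1 ≤ k → k ≤ κ → ∀ x ∈ R k \ R (k - 1),
      fl k x ≤ f x ∧ f x ≤ fu k x)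
    (hencl : ∀ k, 2 ≤ k → k ≤ κ →
      ∀ v ∈ Set.extremePoints ℝ (convexHull ℝ (R (k - 1))),
        fu (k - 1) v ≤ fu k v ∧ fl k v ≤ fl (k - 1) v) :
    ∀ x ∈ R κ, fl κ x ≤ f x ∧ f x ≤ fu κ x :=
  incremental_abstraction_induction_general d n κ f R hfin hR0 fu fl hbracket hencl
end

section
/- Let f : ℝ^d → ℝ^n be a function, let κ ≥ 1 be an integer, let σ ≥ 0, and let ∅ = R_0 ⊆ R_1 ⊆ ⋯ ⊆ R_κ be finite subsets of ℝ^d. For each k ∈ {1, …, κ}, let f̄_k, f_k : ℝ^d → ℝ^n be affine maps such that: (i) f_k(x) ≤ f(x) ≤ f̄_k(x) componentwise for all x ∈ R_k \ R_{k−1}; and (ii) for k ≥ 2, f̄_{k−1}(v) ≤ f̄_k(v) and f_k(v) ≤ f_{k−1}(v) componentwise for every extreme point v of the convex hull of R_{k−1}. Suppose moreover that for every x in the convex hull of R_κ there exist finitely many points v_1, …, v_p ∈ R_κ and nonnegative weights w_1, …, w_p summing to 1 with x = Σ_i w_i v_i and |f_j(x) − Σ_i w_i f_j(v_i)| ≤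 σ for every component j ∈ {1, …, n}. Then for all x in the convex hull of R_κ, f_κ(x) − σ·𝟙 ≤ f(x) ≤ f̄_κ(x) + σ·𝟙 componentwise, where 𝟙 ∈ ℝ^n is the all-ones vector. -/
/-! The bound `f ≤ f̄_k` holds at every point of `R_k`: a point is either new at step `k`, or lies
in `R_{k-1}`, where `f ≤ f̄_{k-1}` by induction and `f̄_{k-1} ≤ f̄_k` on the whole hull of `R_{k-1}`,
because an inequality between affine maps that holds at the extreme points of the hull of a finite
set holds on the hull (Krein–Milman). At a point `x = ∑ wᵢ vᵢ` of the hull of `R_κ`, affinity gives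
`f̄_κ x = ∑ wᵢ f̄_κ vᵢ ≥ ∑ wᵢ f vᵢ`, which is within `σ` of `f x`; the lower bound is symmetric. -/

theorem AffineMap.apply_sum_smul {k E F ι : Type*} [Ring k] [AddCommGroup E] [Module k E]
    [AddCommGroup F] [Module k F] (g : E →ᵃ[k] F) (s : Finset ι) {w : ι → k}
    (hw : ∑ i ∈ s, w i = 1) (v : ι → E) :
    g (∑ i ∈ s, w i • v i) = ∑ i ∈ s, w i • g (v i) := by
  rw [← s.affineCombination_eq_linear_combination v w hw, s.map_affineCombination v w hw,
    s.affineCombination_eq_linear_combination _ w hw, Function.comp_def]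

theorem Set.Finite.convexHull_extremePoints_convexHull {E : Type*} [AddCommGroup E] [Module ℝ E]
    [TopologicalSpace E] [T2Space E] [IsTopologicalAddGroup E] [ContinuousSMul ℝ E]
    [LocallyConvexSpace ℝ E] {s : Set E} (hs : s.Finite) :
    convexHull ℝ ((convexHull ℝ s).extremePoints ℝ) = convexHull ℝ s := by
  have hext : ((convexHull ℝ s).extremePoints ℝ).Finite :=
    hs.subset extremePoints_convexHull_subset
  rw [← (hext.isClosed_convexHull (𝕜 := ℝ)).closure_eq]
  exact closure_convexHull_extremePoints (hs.isCompact_convexHull (𝕜 := ℝ))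
    (convex_convexHull ℝ s)

section Ordered

variable {E F : Type*} [AddCommGroup E] [Module ℝ E]
  [AddCommGroup F] [PartialOrder F] [IsOrderedAddMonoid F] [Module ℝ F] [PosSMulMono ℝ F]

theorem AffineMap.convex_setOf_le_s5 (g₁ g₂ : E →ᵃ[ℝ] F) : Convex ℝ {x | g₁ x ≤ g₂ x} := by
  simpa [Set.preimage, sub_nonneg] using (convex_Ici (0 : F)).affine_preimage (g₂ - g₁)

theorem AffineMap.sum_smul_le_apply_sum_smul {ι : Type*} {f : E → F} {g : E →ᵃ[ℝ] F}
    (s : Finset ι) {w : ι → ℝ} {v : ι → E} (hw₀ : ∀ i ∈ s, 0 ≤ w i) (hw₁ : ∑ i ∈ s, w i = 1)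
    (h : ∀ i ∈ s, f (v i) ≤ g (v i)) :
    ∑ i ∈ s, w i • f (v i) ≤ g (∑ i ∈ s, w i • v i) := by
  rw [g.apply_sum_smul s hw₁]
  exact Finset.sum_le_sum fun i hi => smul_le_smul_of_nonneg_left (h i hi) (hw₀ i hi)

theorem AffineMap.apply_sum_smul_le_sum_smul {ι : Type*} {f : E → F} {g : E →ᵃ[ℝ] F}
    (s : Finset ι) {w : ι → ℝ} {v : ι → E} (hw₀ : ∀ i ∈ s, 0 ≤ w i) (hw₁ : ∑ i ∈ s, w i = 1)
    (h : ∀ i ∈ s, g (v i) ≤ f (v i)) :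
    g (∑ i ∈ s, w i • v i) ≤ ∑ i ∈ s, w i • f (v i) := by
  rw [g.apply_sum_smul s hw₁]
  exact Finset.sum_le_sum fun i hi => smul_le_smul_of_nonneg_left (h i hi) (hw₀ i hi)

variable [TopologicalSpace E] [T2Space E] [IsTopologicalAddGroup E] [ContinuousSMul ℝ E]
  [LocallyConvexSpace ℝ E]

theorem AffineMap.le_on_convexHull_of_le_on_extremePoints {g₁ g₂ : E →ᵃ[ℝ] F} {s : Set E}
    (hs : s.Finite) (h : ∀ v ∈ (convexHull ℝ s).extremePoints ℝ, g₁ v ≤ g₂ v) :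
    ∀ x ∈ convexHull ℝ s, g₁ x ≤ g₂ x := by
  rw [← hs.convexHull_extremePoints_convexHull]
  exact convexHull_min h (g₁.convex_setOf_le_s5 g₂)

theorem le_of_mem_incremental {f : E → F} {R : ℕ → Set E} {g : ℕ → E →ᵃ[ℝ] F} {κ : ℕ}
    (hfin : ∀ k ≤ κ, (R k).Finite) (hR0 : R 0 = ∅)
    (hnew : ∀ k < κ, ∀ x ∈ R (k + 1) \ R k, f x ≤ g (k + 1) x)
    (hgrow : ∀ k, 1 ≤ k → k < κ →
      ∀ v ∈ (convexHull ℝ (R k)).extremePoints ℝ, g k v ≤ g (k + 1) v) :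
    ∀ k ≤ κ, ∀ x ∈ R k, f x ≤ g k x := by
  intro k
  induction k with
  | zero => simp [hR0]
  | succ k ih =>
    intro hk x hx
    by_cases hxk : x ∈ R k
    · have hk1 : 1 ≤ k := Nat.one_le_iff_ne_zero.2 fun h => by simp [h, hR0] at hxk
      exact (ih (by omega) x hxk).trans <|
        AffineMap.le_on_convexHull_of_le_on_extremePoints (hfin k (by omega)) (hgrow k hk1 hk)
          x (subset_convexHull ℝ _ hxk)
    · exact hnew k hk x ⟨hx, hxk⟩

end Ordered

theorem incremental_abstraction_final_general (d n : ℕ) (κ : ℕ)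
    (σ : ℝ)
    (f : (Fin d → ℝ) → (Fin n → ℝ))
    (R : ℕ → Set (Fin d → ℝ))
    (hfin : ∀ k ≤ κ, (R k).Finite)
    (hR0 : R 0 = ∅)
    (fu fl : ℕ → ((Fin d → ℝ) →ᵃ[ℝ] (Fin n → ℝ)))
    (hbracket : ∀ k, 1 ≤ k → k ≤ κ → ∀ x ∈ R k \ R (k - 1),
      fl k x ≤ f x ∧ f x ≤ fu k x)
    (hencl : ∀ k, 2 ≤ k → k ≤ κ →
      ∀ v ∈ Set.extremePoints ℝ (convexHull ℝ (R (k - 1))),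
        fu (k - 1) v ≤ fu k v ∧ fl k v ≤ fl (k - 1) v)
    (hinterp : ∀ x ∈ convexHull ℝ (R κ),
      ∃ (p : ℕ) (v : Fin p → (Fin d → ℝ)) (w : Fin p → ℝ),
        (∀ i, v i ∈ R κ) ∧ (∀ i, 0 ≤ w i) ∧ (∑ i, w i = 1) ∧
        (x = ∑ i, w i • v i) ∧
        (∀ j : Fin n, |f x j - ∑ i, w i * f (v i) j| ≤ σ)) :
    ∀ x ∈ convexHull ℝ (R κ),
      fl κ x - σ • (fun _ : Fin n => (1 : ℝ)) ≤ f x ∧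
      f x ≤ fu κ x + σ • (fun _ : Fin n => (1 : ℝ)) := by
  have hupper : ∀ x ∈ R κ, f x ≤ fu κ x :=
    le_of_mem_incremental hfin hR0 (fun k hk x hx => (hbracket (k + 1) (by omega) hk x hx).2)
      (fun k _ hk v hv => (hencl (k + 1) (by omega) hk v hv).1) κ le_rfl
  have hlower : ∀ x ∈ R κ, fl κ x ≤ f x := fun x hx => neg_le_neg_iff.1 <|
    le_of_mem_incremental (f := -f) (g := fun k => -fl k) hfin hR0
      (fun k hk x hx => neg_le_neg (hbracket (k + 1) (by omega) hk x hx).1)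
      (fun k _ hk v hv => neg_le_neg (hencl (k + 1) (by omega) hk v hv).2) κ le_rfl x hx
  intro x hx
  obtain ⟨p, v, w, hvR, hw₀, hw₁, rfl, herr⟩ := hinterp x hx
  have hl := (fl κ).apply_sum_smul_le_sum_smul (f := f) Finset.univ (fun i _ => hw₀ i) hw₁
    fun i _ => hlower _ (hvR i)
  have hu := (fu κ).sum_smul_le_apply_sum_smul Finset.univ (fun i _ => hw₀ i) hw₁
    fun i _ => hupper _ (hvR i)
  refine ⟨fun j => ?_, fun j => ?_⟩
  all_goals
    have hlj := hl j
    have huj := hu j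
    have herrj := abs_le.1 (herr j)
    simp only [Finset.sum_apply, Pi.smul_apply, smul_eq_mul, Pi.sub_apply, Pi.add_apply,
      mul_one] at hlj huj ⊢
    linarith

/-- The paper's Theorem 1 (incremental affine abstraction): the affine pair
obtained from the incremental abstraction algorithm, after being dilated by
the interpolation error bound `σ` times the all-ones vector, over-approximates
`f` over the entire convex hull of the final operating region `R κ`. -/
theorem incremental_abstraction_final (d n : ℕ) (κ : ℕ) (hκ : 1 ≤ κ)
    (σ : ℝ) (hσ : 0 ≤ σ)
    (f : (Fin d → ℝ) → (Fin n → ℝ))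
    (R : ℕ → Set (Fin d → ℝ))
    (hfin : ∀ k ≤ κ, (R k).Finite)
    (hR0 : R 0 = ∅)
    (hmono : ∀ k, k < κ → R k ⊆ R (k + 1))
    (fu fl : ℕ → ((Fin d → ℝ) →ᵃ[ℝ] (Fin n → ℝ)))
    (hbracket : ∀ k, 1 ≤ k → k ≤ κ → ∀ x ∈ R k \ R (k - 1),
      fl k x ≤ f x ∧ f x ≤ fu k x)
    (hencl : ∀ k, 2 ≤ k → k ≤ κ →
      ∀ v ∈ Set.extremePoints ℝ (convexHull ℝ (R (k - 1))),
        fu (k - 1) v ≤ fu k v ∧ fl k v ≤ fl (k - 1) v)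
    (hinterp : ∀ x ∈ convexHull ℝ (R κ),
      ∃ (p : ℕ) (v : Fin p → (Fin d → ℝ)) (w : Fin p → ℝ),
        (∀ i, v i ∈ R κ) ∧ (∀ i, 0 ≤ w i) ∧ (∑ i, w i = 1) ∧
        (x = ∑ i, w i • v i) ∧
        (∀ j : Fin n, |f x j - ∑ i, w i * f (v i) j| ≤ σ)) :
    ∀ x ∈ convexHull ℝ (R κ),
      fl κ x - σ • (fun _ : Fin n => (1 : ℝ)) ≤ f x ∧
      f x ≤ fu κ x + σ • (fun _ : Fin n => (1 : ℝ)) :=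
  incremental_abstraction_final_general d n κ σ f R hfin hR0 fu fl hbracket hencl hinterp
end

section
/- Let V be a nonempty finite subset of ℝ^d and let δ = max_{u, v ∈ V} ‖u − v‖ be its diameter (with respect to the Euclidean norm). Then for every x in the convex hull of V, there exists v ∈ V with ‖x − v‖ ≤ √(d / (2(d + 1))) · δ. -/
/-!
Write `x = ∑ wᵢ pᵢ` as a convex combination of affinely independent points of `V` (Carathéodory),
so there are at most `d + 1` of them. The weighted mean of `‖pᵢ - x‖²` is half the weighted mean
of `‖pᵢ - pⱼ‖²` over all pairs; the diagonal pairs contribute nothing, so this is at most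
`δ² (1 - ∑ wᵢ²) / 2`, and Cauchy–Schwarz gives `∑ wᵢ² ≥ 1 / (d + 1)`. Some `pᵢ` is no farther
from `x` than this mean.
-/

open Finset InnerProductSpace

section

variable {ι E : Type*} {s : Finset ι} {w : ι → ℝ} {p : ι → E}

theorem exists_le_sum_mul_of_sum_eq_one {f : ι → ℝ} (hw₀ : ∀ i ∈ s, 0 ≤ w i)
    (hw : ∑ i ∈ s, w i = 1) : ∃ i ∈ s, f i ≤ ∑ j ∈ s, w j * f j := by
  obtain ⟨i, hi, hmin⟩ := s.exists_mem_eq_inf' (nonempty_of_sum_ne_zero (hw ▸ one_ne_zero)) f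
  refine ⟨i, hi, ?_⟩
  have h := inf_le_centerMass (f := f) hw₀ (hw ▸ one_pos)
  rw [centerMass_eq_of_sum_1 _ _ hw, hmin] at h
  simpa only [smul_eq_mul] using h

theorem inv_card_le_sum_sq (hw : ∑ i ∈ s, w i = 1) : (#s : ℝ)⁻¹ ≤ ∑ i ∈ s, w i ^ 2 := by
  have hs : 0 < (#s : ℝ) := by
    exact_mod_cast card_pos.2 (nonempty_of_sum_ne_zero (hw ▸ one_ne_zero))
  rw [inv_le_iff_one_le_mul₀' hs]
  simpa [hw] using sq_sum_le_card_mul_sum_sq (s := s) (f := w)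

theorem sum_sum_mul_norm_sub_sq_le [SeminormedAddCommGroup E] {δ : ℝ} (hw₀ : ∀ i ∈ s, 0 ≤ w i)
    (hw : ∑ i ∈ s, w i = 1) (hp : ∀ i ∈ s, ∀ j ∈ s, ‖p i - p j‖ ≤ δ) :
    ∑ i ∈ s, ∑ j ∈ s, w i * w j * ‖p i - p j‖ ^ 2 ≤ δ ^ 2 * (1 - ∑ i ∈ s, w i ^ 2) := by
  classical
  have hrow : ∀ i ∈ s, ∑ j ∈ s, w i * w j * ‖p i - p j‖ ^ 2 ≤ δ ^ 2 * (w i - w i ^ 2) := by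
    intro i hi
    calc ∑ j ∈ s, w i * w j * ‖p i - p j‖ ^ 2
        = ∑ j ∈ s.erase i, w i * w j * ‖p i - p j‖ ^ 2 := by
          rw [← sum_erase_add _ _ hi, sub_self, norm_zero]
          ring
      _ ≤ ∑ j ∈ s.erase i, w i * w j * δ ^ 2 := by
          refine sum_le_sum fun j hj => ?_
          have hj := mem_of_mem_erase hj
          gcongr
          · exact mul_nonneg (hw₀ i hi) (hw₀ j hj)
          · exact hp i hi j hj
      _ = δ ^ 2 * (w i - w i ^ 2) := by
          rw [← sum_mul, ← mul_sum, sum_erase_eq_sub hi, hw]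
          ring
  calc _ ≤ ∑ i ∈ s, δ ^ 2 * (w i - w i ^ 2) := sum_le_sum hrow
    _ = δ ^ 2 * (1 - ∑ i ∈ s, w i ^ 2) := by rw [← mul_sum, sum_sub_distrib, hw]

variable [SeminormedAddCommGroup E] [InnerProductSpace ℝ E] {x : E}

theorem sum_mul_norm_sub_sq_eq_add (hw : ∑ i ∈ s, w i = 1) (hx : ∑ i ∈ s, w i • p i = x)
    (y : E) : ∑ i ∈ s, w i * ‖p i - y‖ ^ 2 = ∑ i ∈ s, w i * ‖p i - x‖ ^ 2 + ‖x - y‖ ^ 2 := by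
  have hcentred : ∑ i ∈ s, w i • (p i - x) = 0 := by
    simp [smul_sub, sum_sub_distrib, ← sum_smul, hw, hx]
  calc ∑ i ∈ s, w i * ‖p i - y‖ ^ 2
      = ∑ i ∈ s, (w i * ‖p i - x‖ ^ 2 + 2 * ⟪w i • (p i - x), x - y⟫_ℝ
          + w i * ‖x - y‖ ^ 2) := by
        refine sum_congr rfl fun i _ => ?_
        rw [← sub_add_sub_cancel (p i) x y, norm_add_sq_real, real_inner_smul_left]
        ring
    _ = ∑ i ∈ s, w i * ‖p i - x‖ ^ 2 + ‖x - y‖ ^ 2 := by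
        rw [sum_add_distrib, sum_add_distrib, ← mul_sum, ← sum_inner, hcentred, ← sum_mul, hw]
        simp

theorem sum_sum_mul_norm_sub_sq_eq (hw : ∑ i ∈ s, w i = 1) (hx : ∑ i ∈ s, w i • p i = x) :
    ∑ i ∈ s, ∑ j ∈ s, w i * w j * ‖p i - p j‖ ^ 2 = 2 * ∑ i ∈ s, w i * ‖p i - x‖ ^ 2 := by
  calc ∑ i ∈ s, ∑ j ∈ s, w i * w j * ‖p i - p j‖ ^ 2
      = ∑ j ∈ s, w j * ∑ i ∈ s, w i * ‖p i - p j‖ ^ 2 := by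
        rw [sum_comm]
        refine sum_congr rfl fun j _ => ?_
        rw [mul_sum]
        exact sum_congr rfl fun i _ => by ring
    _ = ∑ j ∈ s, w j * (∑ i ∈ s, w i * ‖p i - x‖ ^ 2 + ‖p j - x‖ ^ 2) := by
        refine sum_congr rfl fun j _ => ?_
        rw [sum_mul_norm_sub_sq_eq_add hw hx, norm_sub_rev x]
    _ = 2 * ∑ i ∈ s, w i * ‖p i - x‖ ^ 2 := by
        rw [sum_congr rfl fun j _ => mul_add _ _ _, sum_add_distrib, ← sum_mul, hw]
        ring

theorem sum_mul_norm_sub_sq_le {n : ℕ} {δ : ℝ} (hw₀ : ∀ i ∈ s, 0 ≤ w i)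
    (hw : ∑ i ∈ s, w i = 1) (hx : ∑ i ∈ s, w i • p i = x)
    (hp : ∀ i ∈ s, ∀ j ∈ s, ‖p i - p j‖ ≤ δ) (hs : #s ≤ n + 1) :
    ∑ i ∈ s, w i * ‖p i - x‖ ^ 2 ≤ n / (2 * (n + 1)) * δ ^ 2 := by
  have hs₀ : 0 < #s := card_pos.2 (nonempty_of_sum_ne_zero (hw ▸ one_ne_zero))
  have hsq : ((n : ℝ) + 1)⁻¹ ≤ ∑ i ∈ s, w i ^ 2 :=
    (inv_anti₀ (by exact_mod_cast hs₀) (by exact_mod_cast hs)).trans (inv_card_le_sum_sq hw)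
  calc ∑ i ∈ s, w i * ‖p i - x‖ ^ 2
      = (∑ i ∈ s, ∑ j ∈ s, w i * w j * ‖p i - p j‖ ^ 2) / 2 := by
        rw [sum_sum_mul_norm_sub_sq_eq hw hx]
        ring
    _ ≤ δ ^ 2 * (1 - ∑ i ∈ s, w i ^ 2) / 2 := by
        gcongr
        exact sum_sum_mul_norm_sub_sq_le hw₀ hw hp
    _ ≤ δ ^ 2 * (1 - ((n : ℝ) + 1)⁻¹) / 2 := by gcongr
    _ = n / (2 * (n + 1)) * δ ^ 2 := by
        field_simp
        ring

end

theorem dist_to_nearest_vertex_general (d : ℕ)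
    (V : Finset (EuclideanSpace ℝ (Fin d)))
    (δ : ℝ)
    (hδ : IsGreatest {r : ℝ | ∃ u ∈ V, ∃ v ∈ V, r = ‖u - v‖} δ) :
    ∀ x ∈ convexHull ℝ (V : Set (EuclideanSpace ℝ (Fin d))),
      ∃ v ∈ V, ‖x - v‖ ≤ Real.sqrt (d / (2 * (d + 1))) * δ := by
  intro x hx
  obtain ⟨ι, _, p, w, hpV, hp, hw₀, hw, hx⟩ := eq_pos_convex_span_of_mem_convexHull hx
  have hcard : Fintype.card ι ≤ d + 1 := hp.card_le_finrank_succ.trans <| by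
    simpa using Submodule.finrank_le (vectorSpan ℝ (Set.range p))
  have hdiam : ∀ i j, ‖p i - p j‖ ≤ δ := fun i j => hδ.2 ⟨_, hpV ⟨i, rfl⟩, _, hpV ⟨j, rfl⟩, rfl⟩
  have hmean := sum_mul_norm_sub_sq_le (s := univ) (fun i _ => (hw₀ i).le) hw hx
    (fun i _ j _ => hdiam i j) hcard
  obtain ⟨i, -, hi⟩ := exists_le_sum_mul_of_sum_eq_one (f := fun i => ‖p i - x‖ ^ 2)
    (fun i _ => (hw₀ i).le) hw
  have hδ₀ : 0 ≤ δ := by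
    obtain ⟨u, -, v, -, rfl⟩ := hδ.1
    exact norm_nonneg _
  refine ⟨p i, hpV ⟨i, rfl⟩, ?_⟩
  calc ‖x - p i‖ = √(‖p i - x‖ ^ 2) := by rw [Real.sqrt_sq (norm_nonneg _), norm_sub_rev]
    _ ≤ √(d / (2 * (d + 1)) * δ ^ 2) := Real.sqrt_le_sqrt (hi.trans hmean)
    _ = √(d / (2 * (d + 1))) * δ := by rw [Real.sqrt_mul (by positivity), Real.sqrt_sq hδ₀]

/-- Lemma 4.3 of Stämpfle 2000: every point of the convex hull of a nonempty
finite set `V ⊆ ℝ^d` with (Euclidean) diameter `δ` is within distance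
`√(d / (2(d + 1))) · δ` of some point of `V`. -/
theorem dist_to_nearest_vertex (d : ℕ)
    (V : Finset (EuclideanSpace ℝ (Fin d))) (hV : V.Nonempty)
    (δ : ℝ)
    (hδ : IsGreatest {r : ℝ | ∃ u ∈ V, ∃ v ∈ V, r = ‖u - v‖} δ) :
    ∀ x ∈ convexHull ℝ (V : Set (EuclideanSpace ℝ (Fin d))),
      ∃ v ∈ V, ‖x - v‖ ≤ Real.sqrt (d / (2 * (d + 1))) * δ :=
  dist_to_nearest_vertex_general d V δ hδ
end

section
/- Let v_0, …, v_d be affinely independent points in ℝ^d, let S be their convex hull, and let δ = max_{i, j} ‖v_i − v_j‖. Let f : ℝ^d → ℝ be Lipschitz continuous on S with Lipschitz constant λ ≥ 0, and let f_l : ℝ^d → ℝ be the unique affine map with f_l(v_i) = f(v_i) for all i ∈ {0, …, d}. Then for every s ∈ S, |f(s) − f_l(s)| ≤ λ · √(d / (2(d + 1))) · δ. -/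
/-!
Write `s = ∑ wᵢ • vᵢ` as a convex combination of the vertices. Since `f_l` is affine and agrees
with `f` at the vertices, `|f s - f_l s| ≤ λ ∑ wᵢ ‖s - vᵢ‖`. By Jensen, the square of this mean
distance is at most the weighted variance `∑ wᵢ ‖s - vᵢ‖²`, which equals
`½ ∑ᵢⱼ wᵢ wⱼ ‖vᵢ - vⱼ‖² ≤ ½ δ² (1 - ∑ wᵢ²)`, and Cauchy–Schwarz gives `∑ wᵢ² ≥ 1 / (d + 1)`.
-/

open Finset RealInnerProductSpace

variable {ι : Type*} [Fintype ι] {w : ι → ℝ}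

theorem exists_mem_stdSimplex_of_mem_convexHull_range {E : Type*} [AddCommGroup E] [Module ℝ E]
    {v : ι → E} {x : E} (hx : x ∈ convexHull ℝ (Set.range v)) :
    ∃ w ∈ stdSimplex ℝ ι, ∑ i, w i • v i = x := by
  classical
  have hrange :
      Set.range v = Fintype.linearCombination ℝ v '' Set.range (fun i ↦ Pi.single i 1) := by
    rw [← Set.range_comp]
    congr 1
    ext i
    simp [Fintype.linearCombination_apply_single]
  rw [hrange, ← LinearMap.image_convexHull, convexHull_rangle_single_eq_stdSimplex] at hx
  obtain ⟨w, hw, rfl⟩ := hx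
  exact ⟨w, hw, (Fintype.linearCombination_apply ℝ v w).symm⟩

theorem AffineMap.apply_sum_smul_of_sum_eq_one {E F : Type*} [AddCommGroup E] [Module ℝ E]
    [AddCommGroup F] [Module ℝ F] (g : E →ᵃ[ℝ] F) (v : ι → E) (hw : ∑ i, w i = 1) :
    g (∑ i, w i • v i) = ∑ i, w i • g (v i) := by
  rw [← univ.affineCombination_eq_linear_combination v w hw, univ.map_affineCombination v w hw,
    univ.affineCombination_eq_linear_combination _ w hw]
  rfl

theorem sum_sum_mul_mul_le_mul_one_sub_sum_sq (hw₀ : ∀ i, 0 ≤ w i) (hw : ∑ i, w i = 1)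
    {D : ι → ι → ℝ} {M : ℝ} (hdiag : ∀ i, D i i = 0) (hD : ∀ i j, i ≠ j → D i j ≤ M) :
    ∑ i, ∑ j, w i * w j * D i j ≤ M * (1 - ∑ i, w i ^ 2) := by
  classical
  calc ∑ i, ∑ j, w i * w j * D i j ≤ ∑ i, ∑ j, w i * w j * (M - if i = j then M else 0) := by
        gcongr with i _ j _
        · exact mul_nonneg (hw₀ i) (hw₀ j)
        · split_ifs with h
          · simp [h, hdiag]
          · simpa using hD i j h
    _ = M * (1 - ∑ i, w i ^ 2) := by
        simp only [mul_sub, sum_sub_distrib, mul_ite, mul_zero, sum_ite_eq, mem_univ, if_true,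
          ← sum_mul, ← mul_sum, hw]
        ring_nf

theorem abs_sub_affineMap_le_mul_sum_mul_norm_sub {E : Type*} [SeminormedAddCommGroup E]
    [NormedSpace ℝ E] {v : ι → E} {S : Set E} {f : E → ℝ} {lam : ℝ}
    (hf : ∀ x ∈ S, ∀ y ∈ S, |f x - f y| ≤ lam * ‖x - y‖) (g : E →ᵃ[ℝ] ℝ)
    (hg : ∀ i, g (v i) = f (v i)) (hv : ∀ i, v i ∈ S) (hw₀ : ∀ i, 0 ≤ w i) (hw : ∑ i, w i = 1)
    (hc : ∑ i, w i • v i ∈ S) :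
    |f (∑ i, w i • v i) - g (∑ i, w i • v i)| ≤ lam * ∑ i, w i * ‖∑ j, w j • v j - v i‖ := by
  set c := ∑ i, w i • v i
  have herr : f c - g c = ∑ i, w i * (f c - f (v i)) := by
    simp only [c, g.apply_sum_smul_of_sum_eq_one v hw, mul_sub, sum_sub_distrib, ← sum_mul, hw,
      one_mul, hg, smul_eq_mul]
  calc |f c - g c| ≤ ∑ i, |w i * (f c - f (v i))| := herr ▸ abs_sum_le_sum_abs _ _
    _ ≤ ∑ i, w i * (lam * ‖c - v i‖) := by
        gcongr with i
        rw [abs_mul, abs_of_nonneg (hw₀ i)]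
        exact mul_le_mul_of_nonneg_left (hf c hc (v i) (hv i)) (hw₀ i)
    _ = lam * ∑ i, w i * ‖c - v i‖ := by simp only [mul_sum, mul_left_comm]

section InnerProductSpace

variable {E : Type*} [NormedAddCommGroup E] [InnerProductSpace ℝ E] {v : ι → E}

theorem sum_mul_norm_sub_sq_eq_norm_sub_sq_add (hw : ∑ i, w i = 1) (x : E) :
    ∑ j, w j * ‖x - v j‖ ^ 2 =
      ‖x - ∑ i, w i • v i‖ ^ 2 + ∑ j, w j * ‖∑ i, w i • v i - v j‖ ^ 2 := by
  set c := ∑ i, w i • v i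
  have hc : ∑ j, w j • (c - v j) = 0 := by
    simp only [smul_sub, sum_sub_distrib, ← sum_smul, hw, one_smul, c, sub_self]
  have hsplit : ∀ j, ‖x - v j‖ ^ 2 = ‖x - c‖ ^ 2 + 2 * ⟪x - c, c - v j⟫ + ‖c - v j‖ ^ 2 := by
    intro j
    rw [← norm_add_sq_real, sub_add_sub_cancel]
  have hcross : ∑ j, w j * (2 * ⟪x - c, c - v j⟫) = 2 * ⟪x - c, ∑ j, w j • (c - v j)⟫ := by
    simp only [inner_sum, real_inner_smul_right, mul_sum, mul_left_comm]
  simp only [hsplit, mul_add, sum_add_distrib, ← sum_mul, hw, one_mul, hcross, hc, inner_zero_right,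
    mul_zero, add_zero]

theorem two_mul_sum_mul_norm_sub_sq_eq (hw : ∑ i, w i = 1) :
    2 * ∑ j, w j * ‖∑ i, w i • v i - v j‖ ^ 2 = ∑ i, ∑ j, w i * w j * ‖v i - v j‖ ^ 2 := by
  set c := ∑ i, w i • v i
  have hrow : ∀ i, ∑ j, w i * w j * ‖v i - v j‖ ^ 2 =
      w i * ‖c - v i‖ ^ 2 + w i * ∑ j, w j * ‖c - v j‖ ^ 2 := by
    intro i
    simp only [mul_assoc, ← mul_sum, sum_mul_norm_sub_sq_eq_norm_sub_sq_add hw (v i), mul_add,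
      norm_sub_rev (v i) c, c]
  rw [sum_congr rfl fun i _ ↦ hrow i, sum_add_distrib, ← sum_mul, hw, one_mul, two_mul]

theorem sum_mul_norm_sub_le {n : ℕ} (hcard : Fintype.card ι = n + 1) (hw₀ : ∀ i, 0 ≤ w i)
    (hw : ∑ i, w i = 1) {δ : ℝ} (hδ : ∀ i j, ‖v i - v j‖ ≤ δ) :
    ∑ i, w i * ‖∑ j, w j • v j - v i‖ ≤ √(n / (2 * (n + 1))) * δ := by
  have hcs : 1 ≤ (n + 1 : ℝ) * ∑ i, w i ^ 2 := by
    simpa [hw, hcard] using sq_sum_le_card_mul_sum_sq (s := univ) (f := w)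
  have hjensen : (∑ i, w i * ‖∑ j, w j • v j - v i‖) ^ 2 ≤ ∑ i, w i * ‖∑ j, w j • v j - v i‖ ^ 2 :=
    (convexOn_pow 2).map_sum_le (fun i _ ↦ hw₀ i) hw fun i _ ↦ Set.mem_Ici.2 (norm_nonneg _)
  have hpairs : ∑ i, ∑ j, w i * w j * ‖v i - v j‖ ^ 2 ≤ δ ^ 2 * (1 - ∑ i, w i ^ 2) :=
    sum_sum_mul_mul_le_mul_one_sub_sum_sq hw₀ hw (fun i ↦ by simp)
      fun i j _ ↦ pow_le_pow_left₀ (norm_nonneg _) (hδ i j) 2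
  have hvar : ∑ i, w i * ‖∑ j, w j • v j - v i‖ ^ 2 ≤ n / (2 * (n + 1)) * δ ^ 2 := by
    have hsum := two_mul_sum_mul_norm_sub_sq_eq (v := v) hw
    rw [div_mul_eq_mul_div, le_div_iff₀ (by positivity)]
    nlinarith [mul_le_mul_of_nonneg_left hcs (sq_nonneg δ)]
  have hδ₀ : 0 ≤ δ := by
    obtain ⟨i⟩ : Nonempty ι := Fintype.card_pos_iff.1 (by omega)
    simpa using hδ i i
  rw [← Real.sqrt_sq hδ₀, ← Real.sqrt_mul (by positivity)]
  exact (le_abs_self _).trans (Real.abs_le_sqrt (hjensen.trans hvar))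

end InnerProductSpace

theorem interpolation_error_lipschitz_general (d : ℕ)
    (v : Fin (d + 1) → EuclideanSpace ℝ (Fin d))
    (S : Set (EuclideanSpace ℝ (Fin d)))
    (hS : S = convexHull ℝ (Set.range v))
    (δ : ℝ)
    (hδ : IsGreatest {r : ℝ | ∃ i j, r = ‖v i - v j‖} δ)
    (f : EuclideanSpace ℝ (Fin d) → ℝ)
    (lam : ℝ) (hlam : 0 ≤ lam)
    (hlip : ∀ x ∈ S, ∀ y ∈ S, |f x - f y| ≤ lam * ‖x - y‖)
    (fl : EuclideanSpace ℝ (Fin d) →ᵃ[ℝ] ℝ)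
    (hfl : ∀ i, fl (v i) = f (v i)) :
    ∀ s ∈ S, |f s - fl s| ≤ lam * (Real.sqrt (d / (2 * (d + 1))) * δ) := by
  intro s hs
  obtain ⟨w, ⟨hw₀, hw⟩, rfl⟩ := exists_mem_stdSimplex_of_mem_convexHull_range (hS ▸ hs)
  have hvS : ∀ i, v i ∈ S := fun i ↦ hS ▸ subset_convexHull ℝ _ ⟨i, rfl⟩
  calc |f (∑ i, w i • v i) - fl (∑ i, w i • v i)|
      ≤ lam * ∑ i, w i * ‖∑ j, w j • v j - v i‖ :=
        abs_sub_affineMap_le_mul_sum_mul_norm_sub hlip fl hfl hvS hw₀ hw hs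
    _ ≤ lam * (√(d / (2 * (d + 1))) * δ) :=
        mul_le_mul_of_nonneg_left
          (sum_mul_norm_sub_le (Fintype.card_fin _) hw₀ hw fun i j ↦ hδ.2 ⟨i, j, rfl⟩) hlam

/-- Case (ii) of the paper's Lemma 1 (Stämpfle 2000): the linear interpolation
error of a Lipschitz function on a `d`-simplex of diameter `δ` is bounded by
`λ · √(d / (2(d + 1))) · δ`. -/
theorem interpolation_error_lipschitz (d : ℕ)
    (v : Fin (d + 1) → EuclideanSpace ℝ (Fin d))
    (hv : AffineIndependent ℝ v)
    (S : Set (EuclideanSpace ℝ (Fin d)))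
    (hS : S = convexHull ℝ (Set.range v))
    (δ : ℝ)
    (hδ : IsGreatest {r : ℝ | ∃ i j, r = ‖v i - v j‖} δ)
    (f : EuclideanSpace ℝ (Fin d) → ℝ)
    (lam : ℝ) (hlam : 0 ≤ lam)
    (hlip : ∀ x ∈ S, ∀ y ∈ S, |f x - f y| ≤ lam * ‖x - y‖)
    (fl : EuclideanSpace ℝ (Fin d) →ᵃ[ℝ] ℝ)
    (hfl : ∀ i, fl (v i) = f (v i)) :
    ∀ s ∈ S, |f s - fl s| ≤ lam * (Real.sqrt (d / (2 * (d + 1))) * δ) :=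
  interpolation_error_lipschitz_general d v S hS δ hδ f lam hlam hlip fl hfl
end
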